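/- Let a₁, a₂ ∈ [0,∞), b₂₁ ∈ (−∞,0], b₁₁, b₂₂ ∈ (0,∞), θ = 0, m, κ₁, κ₂ ∈ ℝ and y₁, y₂ ∈ [0,∞), x₀ ∈ ℝ, so that e₃(t) = x₀ + m·t − κ₁·∫₀ᵗ e₁(s) ds − κ₂·∫₀ᵗ e₂(s) ds. Then e₃(t)/t → m − κ₁·a₁/b₁₁ − κ₂·( a₂/b₂₂ − b₂₁·a₁/(b₁₁·b₂₂) ) as t → ∞, i.e., E(X_t) has linear polynomial growth. (This is a critical case of Proposition 3.1.) -/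

import Mathlib

/-!
Two averaging operations preserve limits at infinity: if `f → L` then `t⁻¹ ∫₀ᵗ f → L` (Cesàro)
and `∫₀ᵗ e^{-b(t-s)} f(s) ds → L / b` for `b > 0`. The first mean tends to `a₁/b₁₁`; the second
is such a damped convolution of the first plus a relaxing term, so it tends to
`a₂/b₂₂ − b₂₁ a₁/(b₁₁ b₂₂)`. Dividing the integrated equation for `e₃` by `t` and applying Cesàro
to both integrals gives the limit.
-/

open MeasureTheory Filter Real Set Topology

theorem integral_exp_neg_mul {b : ℝ} (hb : b ≠ 0) (t : ℝ) :
    ∫ u in (0:ℝ)..t, exp (-b * u) = (1 - exp (-b * t)) / b := by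
  rw [intervalIntegral.integral_comp_mul_left (fun u => exp u) (neg_ne_zero.2 hb), integral_exp]
  simp [field]

theorem tendsto_exp_neg_mul_atTop {b : ℝ} (hb : 0 < b) :
    Tendsto (fun t => exp (-b * t)) atTop (𝓝 0) :=
  tendsto_exp_atBot.comp <| tendsto_id.const_mul_atTop_of_neg (neg_neg_of_pos hb)

theorem tendsto_integral_exp_neg_mul {b : ℝ} (hb : 0 < b) :
    Tendsto (fun t => ∫ u in (0:ℝ)..t, exp (-b * u)) atTop (𝓝 b⁻¹) := by
  have h := ((tendsto_exp_neg_mul_atTop hb).const_sub 1).div_const b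
  simp_rw [← integral_exp_neg_mul hb.ne'] at h
  simpa using h

theorem integral_exp_neg_mul_sub (b T t : ℝ) :
    ∫ s in T..t, exp (-b * (t - s)) = ∫ u in (0:ℝ)..t - T, exp (-b * u) := by
  rw [intervalIntegral.integral_comp_sub_left (fun u => exp (-b * u)), sub_self]

theorem integral_exp_neg_mul_sub_le {b : ℝ} (hb : 0 < b) (T t : ℝ) :
    ∫ s in T..t, exp (-b * (t - s)) ≤ b⁻¹ := by
  rw [integral_exp_neg_mul_sub, integral_exp_neg_mul hb.ne', ← one_div]
  gcongr
  linarith [exp_pos (-b * (t - T))]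

theorem integral_exp_neg_mul_sub_mul (b t T₁ T₂ : ℝ) (f : ℝ → ℝ) :
    ∫ s in T₁..T₂, exp (-b * (t - s)) * f s = exp (-b * t) * ∫ s in T₁..T₂, exp (b * s) * f s := by
  rw [← intervalIntegral.integral_const_mul]
  congr 1 with s
  rw [← mul_assoc, ← exp_add]
  ring_nf

theorem intervalIntegrable_integral_exp_neg_mul_sub_mul {f : ℝ → ℝ} {T : ℝ} (b : ℝ)
    (hf : IntervalIntegrable f volume 0 T) :
    IntervalIntegrable (fun t => ∫ s in (0:ℝ)..t, exp (-b * (t - s)) * f s) volume 0 T := by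
  simp_rw [integral_exp_neg_mul_sub_mul]
  have hprim := intervalIntegral.continuousOn_primitive_interval'
    (hf.continuousOn_mul (by fun_prop : Continuous fun s => exp (b * s)).continuousOn) left_mem_uIcc
  exact ((by fun_prop : Continuous fun t => exp (-b * t)).continuousOn.mul hprim).intervalIntegrable

theorem isLittleO_integral_of_tendsto_zero {g : ℝ → ℝ}
    (hg : ∀ t, 0 ≤ t → IntervalIntegrable g volume 0 t) (hlim : Tendsto g atTop (𝓝 0)) :
    (fun t => ∫ s in (0:ℝ)..t, g s) =o[atTop] id := by
  refine Asymptotics.isLittleO_iff.2 fun ε hε => ?_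
  obtain ⟨T, hT⟩ := eventually_atTop.1 <|
    (hlim.eventually (Metric.closedBall_mem_nhds 0 (half_pos hε))).and (eventually_ge_atTop 0)
  have hT0 : 0 ≤ T := (hT T le_rfl).2
  filter_upwards [eventually_ge_atTop T, eventually_ge_atTop (2 * ‖∫ s in (0:ℝ)..T, g s‖ / ε)]
    with t hTt htK
  have hTmem : T ∈ uIcc 0 t := mem_uIcc_of_le hT0 hTt
  have hgt := hg t (hT0.trans hTt)
  have htail : ‖∫ s in T..t, g s‖ ≤ ε / 2 * |t - T| :=
    intervalIntegral.norm_integral_le_of_norm_le_const fun s hs => by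
      simpa using (hT s (uIoc_of_le hTt ▸ hs).1.le).1
  have hhead : ‖∫ s in (0:ℝ)..T, g s‖ ≤ ε / 2 * t := by
    rw [div_le_iff₀ hε] at htK; linarith
  rw [abs_of_nonneg (sub_nonneg.2 hTt)] at htail
  rw [id, Real.norm_of_nonneg (hT0.trans hTt), ← intervalIntegral.integral_add_adjacent_intervals
    (hgt.mono_set (uIcc_subset_uIcc left_mem_uIcc hTmem))
    (hgt.mono_set (uIcc_subset_uIcc hTmem right_mem_uIcc))]
  calc _ ≤ ‖∫ s in (0:ℝ)..T, g s‖ + ‖∫ s in T..t, g s‖ := norm_add_le _ _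
    _ ≤ ε * t := by linarith [mul_nonneg hε.le hT0]

theorem tendsto_integral_div_of_tendsto {f : ℝ → ℝ} {L : ℝ}
    (hf : ∀ t, 0 ≤ t → IntervalIntegrable f volume 0 t) (hlim : Tendsto f atTop (𝓝 L)) :
    Tendsto (fun t => (∫ s in (0:ℝ)..t, f s) / t) atTop (𝓝 L) := by
  have h := ((isLittleO_integral_of_tendsto_zero
    (fun t ht => (hf t ht).sub intervalIntegrable_const)
    (by simpa using hlim.sub_const L)).tendsto_div_nhds_zero).add_const L
  rw [zero_add] at h
  refine h.congr' ?_
  filter_upwards [eventually_gt_atTop 0] with t ht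
  rw [intervalIntegral.integral_sub (hf t ht.le) intervalIntegrable_const,
    intervalIntegral.integral_const, id, smul_eq_mul]
  field_simp
  ring

theorem tendsto_integral_exp_neg_mul_sub_mul_of_tendsto_zero {g : ℝ → ℝ} {b : ℝ} (hb : 0 < b)
    (hg : ∀ t, 0 ≤ t → IntervalIntegrable g volume 0 t) (hlim : Tendsto g atTop (𝓝 0)) :
    Tendsto (fun t => ∫ s in (0:ℝ)..t, exp (-b * (t - s)) * g s) atTop (𝓝 0) := by
  refine Metric.tendsto_nhds.2 fun ε hε => ?_
  obtain ⟨T, hT⟩ := eventually_atTop.1 <|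
    (hlim.eventually (Metric.closedBall_mem_nhds 0 (half_pos (mul_pos hε hb)))).and
      (eventually_ge_atTop 0)
  have hT0 : 0 ≤ T := (hT T le_rfl).2
  have hhead :
      Tendsto (fun t => exp (-b * t) * ∫ s in (0:ℝ)..T, exp (b * s) * g s) atTop (𝓝 0) := by
    simpa using (tendsto_exp_neg_mul_atTop hb).mul_const (∫ s in (0:ℝ)..T, exp (b * s) * g s)
  filter_upwards [eventually_ge_atTop T, Metric.tendsto_nhds.1 hhead (ε / 2) (half_pos hε)]
    with t hTt hhead_t
  have hTmem : T ∈ uIcc 0 t := mem_uIcc_of_le hT0 hTt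
  have hgt := (hg t (hT0.trans hTt)).continuousOn_mul
    (by fun_prop : Continuous fun s => exp (-b * (t - s))).continuousOn
  have htail : ‖∫ s in T..t, exp (-b * (t - s)) * g s‖ ≤ ε / 2 := by
    have hbound : Continuous fun s => ε * b / 2 * exp (-b * (t - s)) := by fun_prop
    calc _ ≤ ∫ s in T..t, ε * b / 2 * exp (-b * (t - s)) := by
          refine intervalIntegral.norm_integral_le_of_norm_le hTt
            (Eventually.of_forall fun s hs => ?_) (hbound.intervalIntegrable _ _)
          rw [norm_mul, Real.norm_of_nonneg (exp_pos _).le, mul_comm]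
          gcongr
          simpa using (hT s hs.1.le).1
      _ ≤ ε / 2 := by
          rw [intervalIntegral.integral_const_mul]
          calc _ ≤ ε * b / 2 * b⁻¹ := by gcongr; exact integral_exp_neg_mul_sub_le hb T t
            _ = ε / 2 := by field_simp
  rw [dist_zero_right, ← intervalIntegral.integral_add_adjacent_intervals
    (hgt.mono_set (uIcc_subset_uIcc left_mem_uIcc hTmem))
    (hgt.mono_set (uIcc_subset_uIcc hTmem right_mem_uIcc)), integral_exp_neg_mul_sub_mul b t 0 T]
  rw [dist_zero_right] at hhead_t
  calc _ ≤ _ := norm_add_le _ _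
    _ < ε := by linarith

theorem tendsto_integral_exp_neg_mul_sub_mul_of_tendsto {f : ℝ → ℝ} {b L : ℝ} (hb : 0 < b)
    (hf : ∀ t, 0 ≤ t → IntervalIntegrable f volume 0 t) (hlim : Tendsto f atTop (𝓝 L)) :
    Tendsto (fun t => ∫ s in (0:ℝ)..t, exp (-b * (t - s)) * f s) atTop (𝓝 (L / b)) := by
  have h := (tendsto_integral_exp_neg_mul_sub_mul_of_tendsto_zero hb
    (fun t ht => (hf t ht).sub intervalIntegrable_const) (by simpa using hlim.sub_const L)).add
    ((tendsto_integral_exp_neg_mul hb).const_mul L)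
  rw [zero_add, ← div_eq_mul_inv] at h
  refine h.congr' ?_
  filter_upwards [eventually_ge_atTop 0] with t ht
  simp only [mul_sub (exp _)]
  rw [intervalIntegral.integral_sub
    ((hf t ht).continuousOn_mul (by fun_prop : Continuous fun s => exp (-b * (t - s))).continuousOn)
    ((by fun_prop : Continuous fun s => exp (-b * (t - s)) * L).intervalIntegrable _ _),
    intervalIntegral.integral_mul_const,
    integral_exp_neg_mul_sub, sub_zero]
  ring

theorem tendsto_mul_exp_neg_mul_add_mul_integral {b : ℝ} (hb : 0 < b) (y a : ℝ) :
    Tendsto (fun t => y * exp (-b * t) + a * ∫ u in (0:ℝ)..t, exp (-b * u)) atTop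
      (𝓝 (a / b)) := by
  simpa [div_eq_mul_inv] using
    ((tendsto_exp_neg_mul_atTop hb).const_mul y).add ((tendsto_integral_exp_neg_mul hb).const_mul a)

theorem continuous_mul_exp_neg_mul_add_mul_integral (y a b : ℝ) :
    Continuous fun t => y * exp (-b * t) + a * ∫ u in (0:ℝ)..t, exp (-b * u) := by
  have := intervalIntegral.continuous_primitive (μ := volume)
    (fun _ _ => (by fun_prop : Continuous fun u => exp (-b * u)).intervalIntegrable _ _) 0
  fun_prop

theorem doubleHeston_critical_mean_X_general
    (a1 a2 b21 b11 b22 m κ1 κ2 y1 y2 x0 : ℝ)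
    (hb11 : 0 < b11) (hb22 : 0 < b22)
    (e1 e2 e3 : ℝ → ℝ)
    (he1 : ∀ t, 0 ≤ t →
      e1 t = y1 * Real.exp (-b11 * t) + a1 * ∫ u in (0:ℝ)..t, Real.exp (-b11 * u))
    (he2 : ∀ t, 0 ≤ t →
      e2 t = y2 * Real.exp (-b22 * t) + a2 * (∫ u in (0:ℝ)..t, Real.exp (-b22 * u))
        - b21 * ∫ s in (0:ℝ)..t, Real.exp (-b22 * (t - s)) * e1 s)
    (he3 : ∀ t, 0 ≤ t →
      e3 t = x0 + m * t - κ1 * (∫ s in (0:ℝ)..t, e1 s) - κ2 * ∫ s in (0:ℝ)..t, e2 s) :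
    Tendsto (fun t => e3 t / t) atTop
      (nhds (m - κ1 * a1 / b11 - κ2 * (a2 / b22 - b21 * a1 / (b11 * b22)))) := by
  have he1_int : ∀ t, 0 ≤ t → IntervalIntegrable e1 volume 0 t := fun t ht =>
    ((continuous_mul_exp_neg_mul_add_mul_integral y1 a1 b11).intervalIntegrable 0 t).congr
      fun s hs => (he1 s (uIoc_of_le ht ▸ hs).1.le).symm
  have he1_lim : Tendsto e1 atTop (𝓝 (a1 / b11)) :=
    (tendsto_mul_exp_neg_mul_add_mul_integral hb11 y1 a1).congr' <|
      (eventually_ge_atTop 0).mono fun t ht => (he1 t ht).symm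
  have he2_int : ∀ t, 0 ≤ t → IntervalIntegrable e2 volume 0 t := fun t ht =>
    (((continuous_mul_exp_neg_mul_add_mul_integral y2 a2 b22).intervalIntegrable 0 t).sub
      ((intervalIntegrable_integral_exp_neg_mul_sub_mul b22 (he1_int t ht)).const_mul b21)).congr
      fun s hs => (he2 s (uIoc_of_le ht ▸ hs).1.le).symm
  have hconv_lim := tendsto_integral_exp_neg_mul_sub_mul_of_tendsto hb22 he1_int he1_lim
  have he2_lim : Tendsto e2 atTop (𝓝 (a2 / b22 - b21 * (a1 / b11 / b22))) :=
    ((tendsto_mul_exp_neg_mul_add_mul_integral hb22 y2 a2).sub (hconv_lim.const_mul b21)).congr' <|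
      (eventually_ge_atTop 0).mono fun t ht => (he2 t ht).symm
  have h := (((tendsto_inv_atTop_zero.const_mul x0).add_const m).sub
    ((tendsto_integral_div_of_tendsto he1_int he1_lim).const_mul κ1)).sub
    ((tendsto_integral_div_of_tendsto he2_int he2_lim).const_mul κ2)
  rw [mul_zero, zero_add, ← mul_div_assoc, div_div, mul_div_assoc' b21] at h
  refine h.congr' ?_
  filter_upwards [eventually_gt_atTop 0] with t ht
  rw [he3 t ht.le]
  field_simp

theorem doubleHeston_critical_mean_X
    (a1 a2 b21 b11 b22 m κ1 κ2 y1 y2 x0 : ℝ)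
    (ha1 : 0 ≤ a1) (ha2 : 0 ≤ a2) (hb21 : b21 ≤ 0)
    (hb11 : 0 < b11) (hb22 : 0 < b22)
    (hy1 : 0 ≤ y1) (hy2 : 0 ≤ y2)
    (e1 e2 e3 : ℝ → ℝ)
    (he1 : ∀ t, 0 ≤ t →
      e1 t = y1 * Real.exp (-b11 * t) + a1 * ∫ u in (0:ℝ)..t, Real.exp (-b11 * u))
    (he2 : ∀ t, 0 ≤ t →
      e2 t = y2 * Real.exp (-b22 * t) + a2 * (∫ u in (0:ℝ)..t, Real.exp (-b22 * u))
        - b21 * ∫ s in (0:ℝ)..t, Real.exp (-b22 * (t - s)) * e1 s)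
    (he3 : ∀ t, 0 ≤ t →
      e3 t = x0 + m * t - κ1 * (∫ s in (0:ℝ)..t, e1 s) - κ2 * ∫ s in (0:ℝ)..t, e2 s) :
    Tendsto (fun t => e3 t / t) atTop
      (nhds (m - κ1 * a1 / b11 - κ2 * (a2 / b22 - b21 * a1 / (b11 * b22)))) :=
  doubleHeston_critical_mean_X_general a1 a2 b21 b11 b22 m κ1 κ2 y1 y2 x0 hb11 hb22 e1 e2 e3 he1 he2
    he3
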